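/- arXiv:2112.05743 — 2 statements merged into one kernel-verified Lean document; each statement's English description precedes it below -/
import Mathlib

section
/- Monotonicity argument for effective viscous flux: if p : [0,∞) → ℝ is nondecreasing and ρ_n ⇀ ρ and p(ρ_n) ⇀ q weakly in L¹ of a finite measure space, with ∫ (p(ρ_n) − q)(ρ_n − ρ) dμ → 0 as n → ∞, and p(ρ_n)ρ_n ⇀ r weakly in L¹, then ∫ r dμ ≥ ∫ q ρ dμ. -/
/-!
Minty's trick. For a bounded test function `ψ`, monotonicity gives
`0 ≤ (p ρₙ - p ψ)(ρₙ - ψ) = p(ρₙ)ρₙ - p(ρₙ)ψ - ρₙ p(ψ) + p(ψ)ψ` pointwise, and every term on the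
right converges weakly when integrated over a set `s`, so in the limit
`0 ≤ ∫ₛ (r - qψ - ρ p(ψ) + p(ψ)ψ)`. As `s` is arbitrary the integrand is a.e. nonnegative, and
taking for `ψ` the truncations of `ρ` at levels `K → ∞` gives `qρ ≤ r` a.e.

The hypotheses do not make `p(ρₙ)` integrable, so the sets `s` are restricted to those on which
every `p(ρₙ)` is essentially bounded; in finite measure these exhaust the space up to a null set.
-/

open MeasureTheory Filter

/-- Weak L¹ convergence: convergence of integrals against all bounded (L^∞) test
functions. -/
def WeakL1Conv {X : Type*} [MeasurableSpace X] (μ : Measure X)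
    (f : ℕ → X → ℝ) (g : X → ℝ) : Prop :=
  ∀ φ : X → ℝ, MemLp φ ⊤ μ →
    Tendsto (fun n => ∫ x, f n x * φ x ∂μ) atTop (nhds (∫ x, g x * φ x ∂μ))

open scoped ENNReal Topology

namespace WeakL1Conv

variable {X : Type*} [MeasurableSpace X] {μ : Measure X} {f f' : ℕ → X → ℝ} {g : X → ℝ}

theorem congr_ae (h : WeakL1Conv μ f g) (hf : ∀ n, f n =ᵐ[μ] f' n) : WeakL1Conv μ f' g :=
  fun φ hφ => (h φ hφ).congr fun n => integral_congr_ae <| by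
    filter_upwards [hf n] with x hx
    rw [hx]

theorem tendsto_setIntegral_mul (h : WeakL1Conv μ f g) {s : Set X} (hs : MeasurableSet s)
    {φ : X → ℝ} (hφ : MemLp φ ⊤ μ) :
    Tendsto (fun n => ∫ x in s, f n x * φ x ∂μ) atTop (𝓝 (∫ x in s, g x * φ x ∂μ)) := by
  have hind : ∀ F : X → ℝ, ∫ x, F x * s.indicator φ x ∂μ = ∫ x in s, F x * φ x ∂μ := fun F => by
    simp_rw [← Set.indicator_mul_right, integral_indicator hs]
  simpa only [hind] using h _ (hφ.indicator hs)

end WeakL1Conv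

section EssentiallyBoundedExhaustion

variable {X : Type*} [MeasurableSpace X] {μ : Measure X} [IsFiniteMeasure μ]

theorem exists_nat_measure_norm_gt_lt {g : X → ℝ} (hg : Measurable g) {δ : ℝ≥0∞} (hδ : 0 < δ) :
    ∃ M : ℕ, μ {x | (M : ℝ) < ‖g x‖} < δ := by
  have hanti : Antitone fun M : ℕ => {x | (M : ℝ) < ‖g x‖} := fun a b hab x hx =>
    show (a : ℝ) < ‖g x‖ from (Nat.cast_le.2 hab).trans_lt hx
  have hempty : ⋂ M : ℕ, {x | (M : ℝ) < ‖g x‖} = ∅ := by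
    ext x
    simpa using exists_nat_ge ‖g x‖
  have hlim := tendsto_measure_iInter_atTop (μ := μ)
    (fun M => (measurableSet_lt measurable_const hg.norm).nullMeasurableSet) hanti
    ⟨0, measure_ne_top μ _⟩
  rw [hempty, measure_empty] at hlim
  exact (hlim.eventually (gt_mem_nhds hδ)).exists

theorem exists_measurableSet_measure_compl_lt_forall_memLp_top {g : ℕ → X → ℝ}
    (hg : ∀ n, AEStronglyMeasurable (g n) μ) {ε : ℝ≥0∞} (hε : 0 < ε) :
    ∃ s, MeasurableSet s ∧ μ sᶜ < ε ∧ ∀ n, MemLp (g n) ⊤ (μ.restrict s) := by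
  obtain ⟨δ, hδ_pos, hδ_sum⟩ := ENNReal.exists_pos_sum_of_countable' hε.ne' ℕ
  set g' := fun n => (hg n).mk (g n)
  have hg' : ∀ n, Measurable (g' n) := fun n => (hg n).stronglyMeasurable_mk.measurable
  choose M hM using fun n => exists_nat_measure_norm_gt_lt (μ := μ) (hg' n) (hδ_pos n)
  have hs : MeasurableSet (⋂ n, {x | ‖g' n x‖ ≤ M n}) :=
    MeasurableSet.iInter fun n => measurableSet_le (hg' n).norm measurable_const
  refine ⟨_, hs, ?_, fun n => ?_⟩
  · calc μ (⋂ n, {x | ‖g' n x‖ ≤ M n})ᶜ = μ (⋃ n, {x | (M n : ℝ) < ‖g' n x‖}) := by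
          simp only [Set.compl_iInter, Set.compl_ofPred, not_le]
      _ ≤ ∑' n, μ {x | (M n : ℝ) < ‖g' n x‖} := measure_iUnion_le _
      _ ≤ ∑' n, δ n := ENNReal.tsum_le_tsum fun n => (hM n).le
      _ < ε := hδ_sum
  · refine (memLp_congr_ae (ae_restrict_of_ae (hg n).ae_eq_mk)).2 <|
      memLp_top_of_bound (hg' n).aestronglyMeasurable.restrict (M n) ?_
    exact ae_restrict_of_forall_mem hs fun x hx => Set.mem_iInter.1 hx n

theorem ae_nonneg_of_forall_memLp_top_setIntegral_nonneg {f : X → ℝ} (hf : Integrable f μ)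
    {g : ℕ → X → ℝ} (hg : ∀ n, AEStronglyMeasurable (g n) μ)
    (H : ∀ s, MeasurableSet s → (∀ n, MemLp (g n) ⊤ (μ.restrict s)) → 0 ≤ ∫ x in s, f x ∂μ) :
    0 ≤ᵐ[μ] f := by
  choose B hBm hBμ hBg using fun j : ℕ =>
    exists_measurableSet_measure_compl_lt_forall_memLp_top hg
      (ENNReal.inv_pos.2 (ENNReal.natCast_ne_top j))
  have hcover : ∀ᵐ x ∂μ, x ∈ ⋃ j, B j := by
    refine ae_iff.2 (le_antisymm (ge_of_tendsto' ENNReal.tendsto_inv_nat_nhds_zero fun j => ?_)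
      bot_le)
    exact (measure_mono (Set.compl_subset_compl.2 (Set.subset_iUnion B j))).trans (hBμ j).le
  have hB : ∀ j, 0 ≤ᵐ[μ.restrict (B j)] f := fun j =>
    ae_nonneg_restrict_of_forall_setIntegral_nonneg_inter hf.integrableOn fun s hs _ =>
      H _ (hs.inter (hBm j)) fun n =>
        (hBg j n).mono_measure (Measure.restrict_mono Set.inter_subset_right le_rfl)
  rw [← Measure.restrict_eq_self_of_ae_mem hcover]
  exact (ae_restrict_iUnion_iff _ _).2 hB

end EssentiallyBoundedExhaustion

section Minty

variable {X : Type*} [MeasurableSpace X] {μ : Measure X} [IsFiniteMeasure μ] {p : ℝ → ℝ}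
  {ρn : ℕ → X → ℝ} {ρ q r : X → ℝ}

theorem minty_setIntegral_nonneg (hp : Monotone p) (hρn : ∀ n, Integrable (ρn n) μ)
    (h1 : WeakL1Conv μ ρn ρ) (h2 : WeakL1Conv μ (fun n x => p (ρn n x)) q)
    (h3 : WeakL1Conv μ (fun n x => p (ρn n x) * ρn n x) r)
    {ψ : X → ℝ} (hψ : MemLp ψ ⊤ μ) (hpψ : MemLp (fun x => p (ψ x)) ⊤ μ)
    {s : Set X} (hs : MeasurableSet s) (hps : ∀ n, MemLp (fun x => p (ρn n x)) ⊤ (μ.restrict s)) :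
    0 ≤ ∫ x in s, r x ∂μ - ∫ x in s, q x * ψ x ∂μ - ∫ x in s, ρ x * p (ψ x) ∂μ
      + ∫ x in s, p (ψ x) * ψ x ∂μ := by
  have hψs : Integrable ψ (μ.restrict s) := (hψ.integrable le_top).restrict
  have hlim := (((h3.tendsto_setIntegral_mul hs (memLp_top_const 1)).sub
    (h2.tendsto_setIntegral_mul hs hψ)).sub (h1.tendsto_setIntegral_mul hs hpψ)).add
    (tendsto_const_nhds (x := ∫ x in s, p (ψ x) * ψ x ∂μ))
  simp only [mul_one] at hlim
  refine ge_of_tendsto' hlim fun n => ?_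
  have hmono : 0 ≤ ∫ x in s, (p (ρn n x) * ρn n x - p (ρn n x) * ψ x - ρn n x * p (ψ x)
      + p (ψ x) * ψ x) ∂μ := by
    refine setIntegral_nonneg hs fun x _ => ?_
    have := (hp.monovary monotone_id).sub_mul_sub_nonneg (ψ x) (ρn n x)
    simp only [id] at this
    linarith
  have I1 : Integrable (fun x => p (ρn n x) * ρn n x) (μ.restrict s) :=
    (hρn n).restrict.mul_of_top_right (hps n)
  have I2 : Integrable (fun x => p (ρn n x) * ψ x) (μ.restrict s) := hψs.mul_of_top_right (hps n)
  have I3 : Integrable (fun x => ρn n x * p (ψ x)) (μ.restrict s) :=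
    (hρn n).restrict.mul_of_top_left (hpψ.restrict s)
  have I4 : Integrable (fun x => p (ψ x) * ψ x) (μ.restrict s) :=
    hψs.mul_of_top_right (hpψ.restrict s)
  rwa [integral_add ?_ I4, integral_sub ?_ I3, integral_sub I1 I2] at hmono
  exacts [I1.sub I2, (I1.sub I2).sub I3]

theorem minty_ae_nonneg (hp : Monotone p) (hρn : ∀ n, Integrable (ρn n) μ) (hρ : Integrable ρ μ)
    (hq : Integrable q μ) (hr : Integrable r μ)
    (h1 : WeakL1Conv μ ρn ρ) (h2 : WeakL1Conv μ (fun n x => p (ρn n x)) q)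
    (h3 : WeakL1Conv μ (fun n x => p (ρn n x) * ρn n x) r)
    {ψ : X → ℝ} (hψm : AEStronglyMeasurable ψ μ) {a b : ℝ} (hψab : ∀ᵐ x ∂μ, ψ x ∈ Set.Icc a b) :
    ∀ᵐ x ∂μ, 0 ≤ r x - q x * ψ x - ρ x * p (ψ x) + p (ψ x) * ψ x := by
  have hψ : MemLp ψ ⊤ μ := memLp_of_bounded hψab hψm ⊤
  have hpψ : MemLp (fun x => p (ψ x)) ⊤ μ :=
    memLp_of_bounded (hψab.mono fun x hx => ⟨hp hx.1, hp hx.2⟩)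
      (hp.measurable.comp_aemeasurable hψm.aemeasurable).aestronglyMeasurable ⊤
  have J2 : Integrable (fun x => q x * ψ x) μ := hq.mul_of_top_left hψ
  have J3 : Integrable (fun x => ρ x * p (ψ x)) μ := hρ.mul_of_top_left hpψ
  have J4 : Integrable (fun x => p (ψ x) * ψ x) μ := (hψ.integrable le_top).mul_of_top_right hpψ
  refine ae_nonneg_of_forall_memLp_top_setIntegral_nonneg (((hr.sub J2).sub J3).add J4)
    (fun n => (hp.measurable.comp_aemeasurable (hρn n).aemeasurable).aestronglyMeasurable)
    fun s hs hps => ?_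
  rw [integral_add ?_ J4.integrableOn, integral_sub ?_ J3.integrableOn,
    integral_sub hr.integrableOn J2.integrableOn]
  exacts [minty_setIntegral_nonneg hp hρn h1 h2 h3 hψ hpψ hs hps,
    hr.integrableOn.sub J2.integrableOn, (hr.integrableOn.sub J2.integrableOn).sub J3.integrableOn]

theorem ae_mul_le_of_weakL1Conv (hp : Monotone p) (hρn : ∀ n, Integrable (ρn n) μ)
    (hρ : Integrable ρ μ) (hq : Integrable q μ) (hr : Integrable r μ)
    (h1 : WeakL1Conv μ ρn ρ) (h2 : WeakL1Conv μ (fun n x => p (ρn n x)) q)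
    (h3 : WeakL1Conv μ (fun n x => p (ρn n x) * ρn n x) r) :
    ∀ᵐ x ∂μ, q x * ρ x ≤ r x := by
  have htrunc : ∀ K : ℕ, ∀ᵐ x ∂μ, |ρ x| ≤ K → q x * ρ x ≤ r x := fun K => by
    have hK := minty_ae_nonneg hp hρn hρ hq hr h1 h2 h3 (ψ := fun x => max (-(K : ℝ)) (min (ρ x) K))
      (aestronglyMeasurable_const.sup (hρ.aestronglyMeasurable.inf aestronglyMeasurable_const))
      (ae_of_all _ fun x => ⟨le_max_left _ _, max_le (by simp) (min_le_right _ _)⟩)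
    filter_upwards [hK] with x hx hρx
    rw [min_eq_left (le_of_abs_le hρx), max_eq_right (neg_le_of_abs_le hρx)] at hx
    linarith
  filter_upwards [ae_all_iff.2 htrunc] with x hx
  obtain ⟨K, hK⟩ := exists_nat_ge |ρ x|
  exact hx K hK

end Minty

theorem stmt14_general {X : Type*} [MeasurableSpace X] (μ : Measure X) [IsFiniteMeasure μ]
    (p : ℝ → ℝ) (hp : MonotoneOn p (Set.Ici 0))
    (ρn : ℕ → X → ℝ) (ρ q r : X → ℝ)
    (hρn_int : ∀ n, Integrable (ρn n) μ) (hρ_int : Integrable ρ μ)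
    (hq_int : Integrable q μ) (hr_int : Integrable r μ)
    (hqρ_int : Integrable (fun x => q x * ρ x) μ)
    (hρn_pos : ∀ n, ∀ᵐ x ∂μ, 0 ≤ ρn n x)
    (h1 : WeakL1Conv μ ρn ρ)
    (h2 : WeakL1Conv μ (fun n x => p (ρn n x)) q)
    (h3 : WeakL1Conv μ (fun n x => p (ρn n x) * ρn n x) r) :
    ∫ x, q x * ρ x ∂μ ≤ ∫ x, r x ∂μ := by
  set p₀ : ℝ → ℝ := fun t => p (max t 0)
  have hp₀ : Monotone p₀ := fun a b hab =>
    hp (le_max_right a 0) (le_max_right b 0) (max_le_max hab le_rfl)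
  have hp₀ρn : ∀ n, (fun x => p (ρn n x)) =ᵐ[μ] fun x => p₀ (ρn n x) := fun n => by
    filter_upwards [hρn_pos n] with x hx
    simp only [p₀, max_eq_left hx]
  have h2₀ : WeakL1Conv μ (fun n x => p₀ (ρn n x)) q := h2.congr_ae hp₀ρn
  have h3₀ : WeakL1Conv μ (fun n x => p₀ (ρn n x) * ρn n x) r :=
    h3.congr_ae fun n => (hp₀ρn n).mul (ae_eq_refl _)
  exact integral_mono_ae hqρ_int hr_int
    (ae_mul_le_of_weakL1Conv hp₀ hρn_int hρ_int hq_int hr_int h1 h2₀ h3₀)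

/-- Monotonicity argument for the effective viscous flux: if p is nondecreasing,
ρ_n ⇀ ρ, p(ρ_n) ⇀ q, p(ρ_n)ρ_n ⇀ r weakly in L¹ of a finite measure space, and
∫ (p(ρ_n) − q)(ρ_n − ρ) dμ → 0, then ∫ r dμ ≥ ∫ q ρ dμ. -/
theorem stmt14 {X : Type*} [MeasurableSpace X] (μ : Measure X) [IsFiniteMeasure μ]
    (p : ℝ → ℝ) (hp : MonotoneOn p (Set.Ici 0))
    (ρn : ℕ → X → ℝ) (ρ q r : X → ℝ)
    (hρn_int : ∀ n, Integrable (ρn n) μ) (hρ_int : Integrable ρ μ)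
    (hq_int : Integrable q μ) (hr_int : Integrable r μ)
    (hqρ_int : Integrable (fun x => q x * ρ x) μ)
    (hρn_pos : ∀ n, ∀ᵐ x ∂μ, 0 ≤ ρn n x) (hρ_pos : ∀ᵐ x ∂μ, 0 ≤ ρ x)
    (h1 : WeakL1Conv μ ρn ρ)
    (h2 : WeakL1Conv μ (fun n x => p (ρn n x)) q)
    (h3 : WeakL1Conv μ (fun n x => p (ρn n x) * ρn n x) r)
    (h4 : Tendsto (fun n => ∫ x, (p (ρn n x) - q x) * (ρn n x - ρ x) ∂μ)
        atTop (nhds 0)) :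
    ∫ x, q x * ρ x ∂μ ≤ ∫ x, r x ∂μ :=
  stmt14_general μ p hp ρn ρ q r hρn_int hρ_int hq_int hr_int hqρ_int hρn_pos h1 h2 h3
end

section
/- If z ln z is convex, ρ_n ≥ 0 converge weakly to ρ in L¹ of a finite measure space, and limsup_n ∫ ρ_n ln ρ_n dμ ≤ ∫ ρ ln ρ dμ < ∞, then ρ_n → ρ strongly in L¹. -/
open MeasureTheory Filter

/-!
Put `m n = (ρn n + ρ) / 2`. Convexity of `z ↦ z log z`, in the quantitative form
`(√a - √b)² / 2 ≤ a log a + b log b - 2 m log m`, bounds the squared Hellinger distance of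
`ρn n` and `ρ` by twice the integrated convexity gap. The midpoints converge weakly to `ρ`,
and the entropy is weakly lower semicontinuous: by the Fenchel–Young inequality
`s z - exp (s - 1) ≤ z log z` it is a supremum of weakly continuous functionals, and bounded
truncations of `s = log ρ + 1` nearly attain it. Hence `liminf ∫ m n log m n ≥ ∫ ρ log ρ`,
which together with `limsup ∫ ρn n log ρn n ≤ ∫ ρ log ρ` sends the gap to `0`. Finally
`|a - b| = |√a - √b| (√a + √b)` turns Hellinger convergence into `L¹` convergence, the masses
`∫ ρn n` being bounded.
-/

open Real Topology

namespace Real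

lemma mul_sub_exp_sub_one_le_mul_log (s : ℝ) {z : ℝ} (hz : 0 ≤ z) :
    s * z - exp (s - 1) ≤ z * log z := by
  rcases hz.eq_or_lt with rfl | hz
  · simpa using (exp_pos _).le
  have h := add_one_le_exp (s - 1 - log z)
  rw [exp_sub, exp_log hz, le_div_iff₀ hz] at h
  nlinarith

lemma two_mul_sub_sqrt_mul_sqrt_le_mul_log_sub {x y : ℝ} (hx : 0 ≤ x) (hy : 0 < y) :
    2 * (x - √x * √y) ≤ x * (log x - log y) := by
  rcases hx.eq_or_lt with rfl | hx
  · simp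
  have hsx := sqrt_pos.2 hx
  have hlog : log x - log y = 2 * log (√x / √y) := by
    rw [log_div hsx.ne' (sqrt_pos.2 hy).ne', log_sqrt hx.le, log_sqrt hy.le]; ring
  have h := one_sub_inv_le_log_of_pos (div_pos hsx (sqrt_pos.2 hy))
  rw [inv_div] at h
  calc 2 * (x - √x * √y) = 2 * x * (1 - √y / √x) := by
        field_simp
        linear_combination (-√y) * mul_self_sqrt hx.le
    _ ≤ 2 * x * log (√x / √y) := by gcongr
    _ = x * (log x - log y) := by rw [hlog]; ring

lemma sq_sqrt_sub_sqrt_div_two_le {a b : ℝ} (ha : 0 ≤ a) (hb : 0 ≤ b) :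
    (√a - √b) ^ 2 / 2 ≤ a * log a + b * log b - 2 * ((a + b) / 2 * log ((a + b) / 2)) := by
  set m := (a + b) / 2
  rcases (add_nonneg ha hb).eq_or_lt with hab | hab
  · obtain ⟨rfl, rfl⟩ : a = 0 ∧ b = 0 := ⟨by linarith, by linarith⟩
    simp [m]
  have hm : 0 < m := by positivity
  have ka := two_mul_sub_sqrt_mul_sqrt_le_mul_log_sub ha hm
  have kb := two_mul_sub_sqrt_mul_sqrt_le_mul_log_sub hb hm
  have hsplit : a * log a + b * log b - 2 * (m * log m)
      = a * (log a - log m) + b * (log b - log m) := by simp only [m]; ring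
  have key : (√a - √b) ^ 2 / 2 ≤ 2 * (a - √a * √m) + 2 * (b - √b * √m) := by
    have hm2 : 2 * m = a + b := by simp only [m]; ring
    nlinarith [sq_nonneg (√a + √b - 2 * √m), sq_sqrt ha, sq_sqrt hb, sq_sqrt hm.le]
  linarith

lemma abs_sub_le_sq_sqrt_sub_sqrt_div_add {a b ε : ℝ} (ha : 0 ≤ a) (hb : 0 ≤ b) (hε : 0 < ε) :
    |a - b| ≤ (√a - √b) ^ 2 / (2 * ε) + ε * (a + b) := by
  have hfac : |a - b| = |√a - √b| * (√a + √b) := by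
    rw [← abs_of_nonneg (add_nonneg (sqrt_nonneg a) (sqrt_nonneg b)), ← abs_mul]
    congr 1
    nlinarith [sq_sqrt ha, sq_sqrt hb]
  rw [hfac, div_add' _ _ _ (by positivity), le_div_iff₀ (by positivity)]
  have hsum : (√a + √b) ^ 2 ≤ 2 * (a + b) := by
    nlinarith [sq_nonneg (√a - √b), sq_sqrt ha, sq_sqrt hb]
  nlinarith [sq_nonneg (|√a - √b| - ε * (√a + √b)), sq_abs (√a - √b),
    mul_le_mul_of_nonneg_left hsum (sq_nonneg ε)]

lemma sq_sqrt_sub_sqrt_le {a b : ℝ} (ha : 0 ≤ a) (hb : 0 ≤ b) :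
    (√a - √b) ^ 2 ≤ 2 * (a + b) := by
  nlinarith [sq_nonneg (√a + √b), sq_sqrt ha, sq_sqrt hb]

noncomputable def truncLog (K : ℕ) (t : ℝ) : ℝ := log (max (exp (-K)) (min t (exp K)))

lemma exp_truncLog (K : ℕ) (t : ℝ) : exp (truncLog K t) = max (exp (-K)) (min t (exp K)) :=
  exp_log (lt_max_of_lt_left (exp_pos _))

lemma continuous_truncLog (K : ℕ) : Continuous (truncLog K) :=
  (continuous_const.max (continuous_id.min continuous_const)).log
    fun _ => (lt_max_of_lt_left (exp_pos _)).ne'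

lemma abs_truncLog_le (K : ℕ) (t : ℝ) : |truncLog K t| ≤ K := by
  have hpos : 0 < max (exp (-K)) (min t (exp K)) := lt_max_of_lt_left (exp_pos _)
  rw [abs_le, truncLog, le_log_iff_exp_le hpos, log_le_iff_le_exp hpos]
  exact ⟨le_max_left _ _,
    max_le (exp_le_exp.2 (by linarith [K.cast_nonneg (α := ℝ)])) (min_le_right _ _)⟩

lemma abs_mul_truncLog_le (K : ℕ) {t : ℝ} (ht : 0 ≤ t) : |t * truncLog K t| ≤ |t * log t| := by
  rcases ht.eq_or_lt with rfl | ht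
  · simp
  rw [abs_mul, abs_mul, truncLog]
  refine mul_le_mul_of_nonneg_left ?_ (abs_nonneg t)
  have h1 : exp (-K) ≤ 1 := exp_le_one_iff.2 (by simp)
  have h2 : 1 ≤ exp K := one_le_exp (by simp)
  -- the clamped value lies between `t` and `1`
  rcases le_total t 1 with htl | htl
  · refine abs_le_abs_of_nonpos (log_nonpos (by positivity) ?_) (log_le_log ht ?_)
    · exact max_le h1 ((min_le_left _ _).trans htl)
    · exact le_max_of_le_right (le_min le_rfl (htl.trans h2))
  · refine abs_le_abs_of_nonneg (log_nonneg ?_) (log_le_log (by positivity) ?_)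
    · exact le_max_of_le_right (le_min htl h2)
    · exact max_le (h1.trans htl) (min_le_left _ _)

lemma eventually_truncLog_eq {t : ℝ} (ht : 0 < t) : ∀ᶠ K : ℕ in atTop, truncLog K t = log t := by
  obtain ⟨N, hN⟩ := exists_nat_ge |log t|
  filter_upwards [eventually_ge_atTop N] with K hK
  have hK' : |log t| ≤ K := hN.trans (by exact_mod_cast hK)
  rw [abs_le] at hK'
  have hle : t ≤ exp K := by rw [← exp_log ht]; exact exp_le_exp.2 hK'.2
  have hge : exp (-K) ≤ t := by rw [← exp_log ht]; exact exp_le_exp.2 (by linarith)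
  rw [truncLog, min_eq_left hle, max_eq_right hge]

lemma tendsto_exp_truncLog {t : ℝ} (ht : 0 ≤ t) :
    Tendsto (fun K : ℕ => exp (truncLog K t)) atTop (𝓝 t) := by
  rcases ht.eq_or_lt with rfl | ht
  · have h : ∀ K : ℕ, exp (truncLog K 0) = exp (-K) := fun K => by
      rw [exp_truncLog, max_eq_left ((min_le_left _ _).trans (exp_pos _).le)]
    simp only [h]
    exact tendsto_exp_neg_atTop_nhds_zero.comp tendsto_natCast_atTop_atTop
  · refine tendsto_const_nhds.congr' ?_
    filter_upwards [eventually_truncLog_eq ht] with K hK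
    rw [hK, exp_log ht]

end Real

section

variable {X : Type*} [MeasurableSpace X] {μ : Measure X}

section Entropy

variable {g : X → ℝ}

theorem tendsto_integral_mul_truncLog (hg : AEStronglyMeasurable g μ)
    (hg0 : ∀ᵐ x ∂μ, 0 ≤ g x) (hglog : Integrable (fun x => g x * log (g x)) μ) :
    Tendsto (fun K : ℕ => ∫ x, g x * truncLog K (g x) ∂μ) atTop
      (𝓝 (∫ x, g x * log (g x) ∂μ)) := by
  refine tendsto_integral_of_dominated_convergence (fun x => |g x * log (g x)|)
    (fun K => hg.mul ((continuous_truncLog K).comp_aestronglyMeasurable hg)) hglog.abs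
    (fun K => ?_) ?_
  · filter_upwards [hg0] with x hx using abs_mul_truncLog_le K hx
  · filter_upwards [hg0] with x hx
    rcases hx.eq_or_lt with h | h
    · simp [← h]
    · refine tendsto_const_nhds.congr' ?_
      filter_upwards [eventually_truncLog_eq h] with K hK
      rw [hK]

theorem tendsto_integral_exp_truncLog [IsFiniteMeasure μ] (hg : Integrable g μ)
    (hg0 : ∀ᵐ x ∂μ, 0 ≤ g x) :
    Tendsto (fun K : ℕ => ∫ x, exp (truncLog K (g x)) ∂μ) atTop (𝓝 (∫ x, g x ∂μ)) := by
  refine tendsto_integral_of_dominated_convergence (fun x => |g x| + 1)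
    (fun K => (continuous_exp.comp (continuous_truncLog K)).comp_aestronglyMeasurable hg.1)
    (hg.abs.add (integrable_const 1)) (fun K => ae_of_all _ fun x => ?_) ?_
  · rw [norm_of_nonneg (exp_pos _).le, exp_truncLog]
    refine max_le ?_ ((min_le_left _ _).trans ?_)
    · linarith [exp_le_one_iff.2 (neg_nonpos.2 (Nat.cast_nonneg K : (0:ℝ) ≤ K)), abs_nonneg (g x)]
    · linarith [le_abs_self (g x)]
  · filter_upwards [hg0] with x hx using tendsto_exp_truncLog hx

lemma memLp_top_truncLog_comp (hg : AEStronglyMeasurable g μ) (K : ℕ) :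
    MemLp (fun x => truncLog K (g x)) ⊤ μ :=
  memLp_top_of_bound ((continuous_truncLog K).comp_aestronglyMeasurable hg) K
    (ae_of_all _ fun x => abs_truncLog_le K (g x))

lemma integral_mul_sub_integral_exp_le_integral_mul_log {f φ : X → ℝ} (hf : Integrable f μ)
    (hf0 : ∀ᵐ x ∂μ, 0 ≤ f x) (hflog : Integrable (fun x => f x * log (f x)) μ)
    (hφ : MemLp φ ⊤ μ) (hexp : Integrable (fun x => exp (φ x - 1)) μ) :
    ∫ x, f x * φ x ∂μ - ∫ x, exp (φ x - 1) ∂μ ≤ ∫ x, f x * log (f x) ∂μ := by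
  have hfφ : Integrable (fun x => f x * φ x) μ := hf.mul_of_top_left hφ
  rw [← integral_sub hfφ hexp]
  refine integral_mono_ae (hfφ.sub hexp) hflog ?_
  filter_upwards [hf0] with x hx
  simpa only [mul_comm (φ x)] using mul_sub_exp_sub_one_le_mul_log (φ x) hx

end Entropy

namespace WeakL1Conv

variable {f : ℕ → X → ℝ} {g : X → ℝ}

lemma tendsto_integral (hw : WeakL1Conv μ f g) :
    Tendsto (fun n => ∫ x, f n x ∂μ) atTop (𝓝 (∫ x, g x ∂μ)) := by
  simpa using hw (fun _ => 1) (memLp_top_const 1)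

lemma ae_nonneg (hw : WeakL1Conv μ f g) (hf0 : ∀ n, ∀ᵐ x ∂μ, 0 ≤ f n x)
    (hg : Integrable g μ) : ∀ᵐ x ∂μ, 0 ≤ g x := by
  refine ae_nonneg_of_forall_setIntegral_nonneg hg fun s hs _ => ?_
  have hind : ∀ h : X → ℝ, (fun x => h x * s.indicator 1 x) = s.indicator h := fun h => by
    ext x; by_cases hx : x ∈ s <;> simp [hx]
  have hlim := hw (s.indicator 1) ((memLp_top_const 1).indicator hs)
  rw [hind, integral_indicator hs] at hlim
  refine ge_of_tendsto hlim (Eventually.of_forall fun n => ?_)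
  rw [hind, integral_indicator hs]
  exact setIntegral_nonneg_of_ae_restrict (ae_restrict_of_ae (hf0 n))

lemma midpoint (hw : WeakL1Conv μ f g) (hf : ∀ n, Integrable (f n) μ) (hg : Integrable g μ) :
    WeakL1Conv μ (fun n x => (f n x + g x) / 2) g := by
  intro φ hφ
  have hsplit : ∀ n, ∫ x, (f n x + g x) / 2 * φ x ∂μ
      = (∫ x, f n x * φ x ∂μ + ∫ x, g x * φ x ∂μ) / 2 := fun n => by
    have hfφ : Integrable (fun x => f n x * φ x) μ := (hf n).mul_of_top_left hφ
    have hgφ : Integrable (fun x => g x * φ x) μ := hg.mul_of_top_left hφ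
    rw [← integral_add hfφ hgφ, ← integral_div]
    congr 1 with x
    ring
  simp only [hsplit]
  simpa using ((hw φ hφ).add_const (∫ x, g x * φ x ∂μ)).div_const 2

theorem eventually_integral_mul_log_gt [IsFiniteMeasure μ] (hw : WeakL1Conv μ f g)
    (hf : ∀ n, Integrable (f n) μ) (hf0 : ∀ n, ∀ᵐ x ∂μ, 0 ≤ f n x)
    (hflog : ∀ n, Integrable (fun x => f n x * log (f n x)) μ) (hg : Integrable g μ)
    (hg0 : ∀ᵐ x ∂μ, 0 ≤ g x) (hglog : Integrable (fun x => g x * log (g x)) μ)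
    {ε : ℝ} (hε : 0 < ε) :
    ∀ᶠ n in atTop, ∫ x, g x * log (g x) ∂μ - ε < ∫ x, f n x * log (f n x) ∂μ := by
  set φ : ℕ → X → ℝ := fun K x => truncLog K (g x) + 1
  have hψ := memLp_top_truncLog_comp hg.1
  have hφ : ∀ K, MemLp (φ K) ⊤ μ := fun K => (hψ K).add (memLp_top_const 1)
  have hexp : ∀ K, Integrable (fun x => exp (φ K x - 1)) μ := fun K => by
    simp only [φ, add_sub_cancel_right]
    refine Integrable.of_bound
      ((continuous_exp.comp (continuous_truncLog K)).comp_aestronglyMeasurable hg.1) (exp K)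
      (ae_of_all _ fun x => ?_)
    rw [norm_of_nonneg (exp_pos _).le]
    exact exp_le_exp.2 (le_of_abs_le (abs_truncLog_le K _))
  have hdual : Tendsto (fun K => ∫ x, g x * φ K x ∂μ - ∫ x, exp (φ K x - 1) ∂μ) atTop
      (𝓝 (∫ x, g x * log (g x) ∂μ)) := by
    have hsplit : ∀ K, ∫ x, g x * φ K x ∂μ - ∫ x, exp (φ K x - 1) ∂μ
        = ∫ x, g x * truncLog K (g x) ∂μ
          + (∫ x, g x ∂μ - ∫ x, exp (truncLog K (g x)) ∂μ) := fun K => by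
      have hgψ : Integrable (fun x => g x * truncLog K (g x)) μ := hg.mul_of_top_left (hψ K)
      simp only [φ, add_sub_cancel_right, mul_add, mul_one]
      rw [integral_add hgψ hg]
      ring
    simp only [hsplit]
    simpa using (tendsto_integral_mul_truncLog hg.1 hg0 hglog).add
      ((tendsto_integral_exp_truncLog hg hg0).const_sub (∫ x, g x ∂μ))
  obtain ⟨K, hK⟩ := (hdual.eventually (lt_mem_nhds (sub_lt_self _ hε))).exists
  filter_upwards [((hw (φ K) (hφ K)).sub_const (∫ x, exp (φ K x - 1) ∂μ)).eventually
    (lt_mem_nhds hK)] with n hn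
  exact hn.trans_le (integral_mul_sub_integral_exp_le_integral_mul_log (hf n) (hf0 n) (hflog n)
    (hφ K) (hexp K))

end WeakL1Conv

section Hellinger

variable {f g : X → ℝ}

lemma integrable_sq_sqrt_sub_sqrt (hf : Integrable f μ) (hg : Integrable g μ)
    (hf0 : ∀ᵐ x ∂μ, 0 ≤ f x) (hg0 : ∀ᵐ x ∂μ, 0 ≤ g x) :
    Integrable (fun x => (√(f x) - √(g x)) ^ 2) μ := by
  refine ((hf.add hg).const_mul 2).mono'
    (((continuous_sqrt.comp_aestronglyMeasurable hf.1).sub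
      (continuous_sqrt.comp_aestronglyMeasurable hg.1)).pow 2) ?_
  filter_upwards [hf0, hg0] with x hfx hgx
  rw [norm_of_nonneg (sq_nonneg _)]
  exact sq_sqrt_sub_sqrt_le hfx hgx

lemma integral_abs_sub_le (hf : Integrable f μ) (hg : Integrable g μ)
    (hf0 : ∀ᵐ x ∂μ, 0 ≤ f x) (hg0 : ∀ᵐ x ∂μ, 0 ≤ g x) {ε : ℝ} (hε : 0 < ε) :
    ∫ x, |f x - g x| ∂μ ≤
      (∫ x, (√(f x) - √(g x)) ^ 2 ∂μ) / (2 * ε) + ε * (∫ x, f x ∂μ + ∫ x, g x ∂μ) := by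
  have hH := (integrable_sq_sqrt_sub_sqrt hf hg hf0 hg0).div_const (2 * ε)
  have hfg : Integrable (fun x => ε * (f x + g x)) μ := (hf.add hg).const_mul ε
  rw [← integral_add hf hg, ← integral_div, ← integral_const_mul, ← integral_add hH hfg]
  refine integral_mono_ae (hf.sub hg).abs (hH.add hfg) ?_
  filter_upwards [hf0, hg0] with x hfx hgx using abs_sub_le_sq_sqrt_sub_sqrt_div_add hfx hgx hε

theorem tendsto_integral_abs_sub_of_tendsto_integral_sq_sqrt_sub_sqrt {f : ℕ → X → ℝ}
    (hf : ∀ n, Integrable (f n) μ) (hg : Integrable g μ) (hf0 : ∀ n, ∀ᵐ x ∂μ, 0 ≤ f n x)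
    (hg0 : ∀ᵐ x ∂μ, 0 ≤ g x) (hmass : Tendsto (fun n => ∫ x, f n x ∂μ) atTop (𝓝 (∫ x, g x ∂μ)))
    (hH : Tendsto (fun n => ∫ x, (√(f n x) - √(g x)) ^ 2 ∂μ) atTop (𝓝 0)) :
    Tendsto (fun n => ∫ x, |f n x - g x| ∂μ) atTop (𝓝 0) := by
  set M := ∫ x, g x ∂μ
  have hM : 0 ≤ M := integral_nonneg_of_ae hg0
  refine tendsto_order.2 ⟨fun a ha => Eventually.of_forall fun n =>
    ha.trans_le (integral_nonneg fun x => abs_nonneg _), fun δ hδ => ?_⟩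
  set ε := δ / (4 * (M + 1))
  have hε : 0 < ε := by positivity
  have hεδ : ε * (4 * (M + 1)) = δ := div_mul_cancel₀ _ (by positivity)
  filter_upwards [hmass.eventually (gt_mem_nhds (lt_add_one M)),
    hH.eventually (gt_mem_nhds (by positivity : 0 < δ * ε))] with n hfn hHn
  have hH_lt : (∫ x, (√(f n x) - √(g x)) ^ 2 ∂μ) / (2 * ε) < δ / 2 := by
    rw [div_lt_iff₀ (by positivity)]
    linarith
  have hmass_le : ε * (∫ x, f n x ∂μ + M) ≤ δ / 2 := by
    nlinarith
  linarith [integral_abs_sub_le (hf n) hg (hf0 n) hg0 hε]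

lemma integrable_mul_log_midpoint [IsFiniteMeasure μ] (hf : AEStronglyMeasurable f μ)
    (hg : AEStronglyMeasurable g μ) (hf0 : ∀ᵐ x ∂μ, 0 ≤ f x) (hg0 : ∀ᵐ x ∂μ, 0 ≤ g x)
    (hflog : Integrable (fun x => f x * log (f x)) μ)
    (hglog : Integrable (fun x => g x * log (g x)) μ) :
    Integrable (fun x => (f x + g x) / 2 * log ((f x + g x) / 2)) μ := by
  refine (((hflog.abs.add hglog.abs).div_const 2).add (integrable_const (exp (-1)))).mono'
    (continuous_mul_log.comp_aestronglyMeasurable (by fun_prop)) ?_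
  filter_upwards [hf0, hg0] with x hfx hgx
  have hlow := mul_sub_exp_sub_one_le_mul_log 0 (by positivity : 0 ≤ (f x + g x) / 2)
  have hup := sq_sqrt_sub_sqrt_div_two_le hfx hgx
  rw [norm_eq_abs, abs_le]
  simp only [Pi.add_apply]
  constructor
  · linarith [abs_nonneg (f x * log (f x)), abs_nonneg (g x * log (g x)), exp_pos (-1)]
  · linarith [le_abs_self (f x * log (f x)), le_abs_self (g x * log (g x)), exp_pos (-1),
      sq_nonneg (√(f x) - √(g x))]

lemma integral_sq_sqrt_sub_sqrt_le [IsFiniteMeasure μ] (hf : Integrable f μ) (hg : Integrable g μ)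
    (hf0 : ∀ᵐ x ∂μ, 0 ≤ f x) (hg0 : ∀ᵐ x ∂μ, 0 ≤ g x)
    (hflog : Integrable (fun x => f x * log (f x)) μ)
    (hglog : Integrable (fun x => g x * log (g x)) μ) :
    ∫ x, (√(f x) - √(g x)) ^ 2 ∂μ ≤
      2 * (∫ x, f x * log (f x) ∂μ + ∫ x, g x * log (g x) ∂μ
        - 2 * ∫ x, (f x + g x) / 2 * log ((f x + g x) / 2) ∂μ) := by
  have hsum : Integrable (fun x => f x * log (f x) + g x * log (g x)) μ := hflog.add hglog
  have hmid : Integrable (fun x => 2 * ((f x + g x) / 2 * log ((f x + g x) / 2))) μ :=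
    (integrable_mul_log_midpoint hf.1 hg.1 hf0 hg0 hflog hglog).const_mul 2
  have hgap := hsum.sub hmid
  rw [← integral_add hflog hglog, ← integral_const_mul, ← integral_sub hsum hmid,
    ← integral_const_mul]
  refine integral_mono_ae (integrable_sq_sqrt_sub_sqrt hf hg hf0 hg0) (hgap.const_mul 2) ?_
  filter_upwards [hf0, hg0] with x hfx hgx
  linarith [sq_sqrt_sub_sqrt_div_two_le hfx hgx]

end Hellinger

theorem WeakL1Conv.tendsto_integral_sq_sqrt_sub_sqrt [IsFiniteMeasure μ] {f : ℕ → X → ℝ}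
    {g : X → ℝ} (hw : WeakL1Conv μ f g) (hf : ∀ n, Integrable (f n) μ)
    (hf0 : ∀ n, ∀ᵐ x ∂μ, 0 ≤ f n x) (hflog : ∀ n, Integrable (fun x => f n x * log (f n x)) μ)
    (hg : Integrable g μ) (hg0 : ∀ᵐ x ∂μ, 0 ≤ g x)
    (hglog : Integrable (fun x => g x * log (g x)) μ)
    (hbdd : IsBoundedUnder (· ≤ ·) atTop fun n => ∫ x, f n x * log (f n x) ∂μ)
    (hlimsup : limsup (fun n => ∫ x, f n x * log (f n x) ∂μ) atTop ≤ ∫ x, g x * log (g x) ∂μ) :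
    Tendsto (fun n => ∫ x, (√(f n x) - √(g x)) ^ 2 ∂μ) atTop (𝓝 0) := by
  have hm0 : ∀ n, ∀ᵐ x ∂μ, 0 ≤ (f n x + g x) / 2 := fun n => by
    filter_upwards [hf0 n, hg0] with x hfx hgx
    positivity
  have hmlog := fun n => integrable_mul_log_midpoint (hf n).1 hg.1 (hf0 n) hg0 (hflog n) hglog
  refine tendsto_order.2 ⟨fun a ha => Eventually.of_forall fun n =>
    ha.trans_le (integral_nonneg fun x => sq_nonneg _), fun ε hε => ?_⟩
  filter_upwards [eventually_lt_of_limsup_lt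
      (hlimsup.trans_lt (lt_add_of_pos_right _ (by positivity : 0 < ε / 8))) hbdd,
    (hw.midpoint hf hg).eventually_integral_mul_log_gt (fun n => ((hf n).add hg).div_const 2)
      hm0 hmlog hg hg0 hglog (by positivity : 0 < ε / 8)] with n hup hlow
  linarith [integral_sq_sqrt_sub_sqrt_le (hf n) hg (hf0 n) hg0 (hflog n) hglog]

end

/-- If ρ_n ≥ 0 converge weakly to ρ in L¹ of a finite measure space, the quantities
ρ_n ln ρ_n are uniformly in L¹, and limsup_n ∫ ρ_n ln ρ_n ≤ ∫ ρ ln ρ < ∞, then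
ρ_n → ρ strongly in L¹. -/
theorem stmt15 {X : Type*} [MeasurableSpace X] (μ : Measure X) [IsFiniteMeasure μ]
    (ρn : ℕ → X → ℝ) (ρ : X → ℝ)
    (hρn_int : ∀ n, Integrable (ρn n) μ) (hρ_int : Integrable ρ μ)
    (hρn_pos : ∀ n, ∀ᵐ x ∂μ, 0 ≤ ρn n x)
    (hlog_int : Integrable (fun x => ρ x * Real.log (ρ x)) μ)
    (hlogn_int : ∀ n, Integrable (fun x => ρn n x * Real.log (ρn n x)) μ)
    (hunif : ∃ C : ℝ, ∀ n, ∫ x, |ρn n x * Real.log (ρn n x)| ∂μ ≤ C)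
    (hweak : WeakL1Conv μ ρn ρ)
    (hlimsup : limsup (fun n => ∫ x, ρn n x * Real.log (ρn n x) ∂μ) atTop
        ≤ ∫ x, ρ x * Real.log (ρ x) ∂μ) :
    Tendsto (fun n => ∫ x, |ρn n x - ρ x| ∂μ) atTop (nhds 0) := by
  have hρ_pos := hweak.ae_nonneg hρn_pos hρ_int
  obtain ⟨C, hC⟩ := hunif
  have hbdd : IsBoundedUnder (· ≤ ·) atTop fun n => ∫ x, ρn n x * log (ρn n x) ∂μ :=
    isBoundedUnder_of ⟨C, fun n =>
      (le_abs_self _).trans (abs_integral_le_integral_abs.trans (hC n))⟩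
  exact tendsto_integral_abs_sub_of_tendsto_integral_sq_sqrt_sub_sqrt hρn_int hρ_int hρn_pos
    hρ_pos hweak.tendsto_integral (hweak.tendsto_integral_sq_sqrt_sub_sqrt hρn_int hρn_pos
      hlogn_int hρ_int hρ_pos hlog_int hbdd hlimsup)
end
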